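/- arXiv:1701.03787 — 5 statements merged into one kernel-verified Lean document; each statement's English description precedes it below -/
import Mathlib

section
/- Let M ∈ ℕ, ξ₀ ∈ ℝ, and define p_k = 8k(k+1)(k+2)(k+4)π, q_j = 1/(j+3), r_k = 24(k+1)(k+2)π, s_j = (j+2)²/(j+3) for natural numbers k, j. Let H, L, U be M×M real matrices such that: (i) H_{kj} = ξ₀(p_k q_j + r_k s_j) whenever j − k ≥ 6 and j − k is even; (ii) L has unit diagonal and L_{kj} = 0 unless j = k, j = k−2 or j = k−4; (iii) L·U = H. Define sequences a, b recursively by a₀ = p₀, a₁ = p₁, a₂ = p₂ − L_{2,0}a₀, a₃ = p₃ − L_{3,1}a₁, and a_k = p_k − L_{k,k−2}a_{k−2} − L_{k,k−4}a_{k−4} for k ≥ 4, with b defined in the same way with r in place of p. Then for all indices k, j < M with j − k ≥ 6 and j − k even, U_{kj} = ξ₀(a_k q_j + b_k s_j). -/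
open Real

/-- `p_k = 8k(k+1)(k+2)(k+4)π`. -/
noncomputable def pCoef (k : ℕ) : ℝ := 8 * k * (k + 1) * (k + 2) * (k + 4) * Real.pi

/-- `q_j = 1/(j+3)`. -/
noncomputable def qCoef (j : ℕ) : ℝ := 1 / (j + 3)

/-- `r_k = 24(k+1)(k+2)π`. -/
noncomputable def rCoef (k : ℕ) : ℝ := 24 * (k + 1) * (k + 2) * Real.pi

/-- `s_j = (j+2)²/(j+3)`. -/
noncomputable def sCoef (j : ℕ) : ℝ := (j + 2) ^ 2 / (j + 3)

/-!
Row `k` of `L * U = H` has at most three nonzero terms, so on column `j` it reads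
`U k j + L k (k-2) * U (k-2) j + L k (k-4) * U (k-4) j = H k j`: the entries of the column are
obtained by forward substitution. The recursions defining `a` and `b` say that
`ξ₀ (a k * q j + b k * s j)` satisfies the same forward substitution with right-hand side
`ξ₀ (p k * q j + r k * s j)`, which is `H k j` in the region `k + 6 ≤ j`, `j - k` even. That region
is closed under `k ↦ k - 2`, so the two columns agree there by strong induction on `k`.
-/

open Finset

section BandMulVec

variable {R : Type*}

/-- Entry `k` of `L x`, for `L` unit lower triangular and supported on subdiagonals `2` and `4`. -/
def bandMulVec [Semiring R] (L : ℕ → ℕ → R) (x : ℕ → R) (k : ℕ) : R :=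
  x k + (if 2 ≤ k then L k (k - 2) * x (k - 2) else 0)
    + (if 4 ≤ k then L k (k - 4) * x (k - 4) else 0)

theorem sum_range_ite_eq_add [AddCommMonoid R] {M k : ℕ} (hk : k < M) (d : ℕ) (f : ℕ → R) :
    ∑ i ∈ range M, (if k = i + d then f i else 0) = if d ≤ k then f (k - d) else 0 := by
  split_ifs with hd
  · have hcond : ∀ i, (k = i + d) ↔ (k - d = i) := fun i => by omega
    simp only [hcond, sum_ite_eq, mem_range]
    exact if_pos (by omega)
  · exact sum_eq_zero fun i _ => if_neg (by omega)

theorem sum_range_mul_eq_bandMulVec [Semiring R] {M k : ℕ} {L : ℕ → ℕ → R} (hk : k < M)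
    (hdiag : L k k = 1) (hzero : ∀ i < M, i ≠ k → k ≠ i + 2 → k ≠ i + 4 → L k i = 0)
    (x : ℕ → R) :
    ∑ i ∈ range M, L k i * x i = bandMulVec L x k := by
  have hsplit : ∀ i ∈ range M, L k i * x i = (if k = i + 0 then L k i * x i else 0)
      + (if k = i + 2 then L k i * x i else 0) + (if k = i + 4 then L k i * x i else 0) := by
    intro i hi
    by_cases h0 : k = i
    · subst h0; simp
    by_cases h2 : k = i + 2
    · simp [h2]
    by_cases h4 : k = i + 4
    · simp [h4]
    simp [hzero i (mem_range.mp hi) (Ne.symm h0) h2 h4, h2, h4]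
  rw [sum_congr rfl hsplit, sum_add_distrib, sum_add_distrib, sum_range_ite_eq_add hk,
    sum_range_ite_eq_add hk, sum_range_ite_eq_add hk]
  simp [bandMulVec, hdiag]

theorem bandMulVec_linComb [CommSemiring R] (L : ℕ → ℕ → R) (a b : ℕ → R) (c u w : R) (k : ℕ) :
    bandMulVec L (fun i => c * (a i * u + b i * w)) k
      = c * (bandMulVec L a k * u + bandMulVec L b k * w) := by
  simp only [bandMulVec]
  split_ifs <;> ring

theorem bandMulVec_eq_of_recursion [Ring R] {L : ℕ → ℕ → R} {a v : ℕ → R}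
    (h0 : a 0 = v 0) (h1 : a 1 = v 1)
    (h2 : a 2 = v 2 - L 2 0 * a 0) (h3 : a 3 = v 3 - L 3 1 * a 1)
    (h : ∀ k, 4 ≤ k → a k = v k - L k (k - 2) * a (k - 2) - L k (k - 4) * a (k - 4)) :
    ∀ k, bandMulVec L a k = v k
  | 0 => by simp [bandMulVec, h0]
  | 1 => by simp [bandMulVec, h1]
  | 2 => by simp [bandMulVec, h2]
  | 3 => by simp [bandMulVec, h3]
  | k + 4 => by simp [bandMulVec, h (k + 4) (by omega)]; abel

theorem eq_of_bandMulVec_eq [Ring R] {L : ℕ → ℕ → R} {x y : ℕ → R} {P : ℕ → Prop}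
    (hP : ∀ k, P k → 2 ≤ k → P (k - 2))
    (h : ∀ k, P k → bandMulVec L x k = bandMulVec L y k) : ∀ k, P k → x k = y k := by
  intro k
  induction k using Nat.strong_induction_on with
  | _ k ih =>
    intro hk
    have hx := h k hk
    simp only [bandMulVec] at hx
    split_ifs at hx with h2 h4
    · have hk2 := hP k hk h2
      have hk4 : P (k - 4) := by simpa [Nat.sub_sub] using hP (k - 2) hk2 (by omega)
      rw [ih (k - 2) (by omega) hk2, ih (k - 4) (by omega) hk4] at hx
      simpa using hx
    · rw [ih (k - 2) (by omega) (hP k hk h2)] at hx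
      simpa using hx
    · omega
    · simpa using hx

end BandMulVec

/-- Structure of the dense upper factor in the pivot-free LU decomposition of the
biharmonic coefficient matrix: beyond the fourth superdiagonal the entries of `U`
are the rank-two combination `ξ₀ (a_k q_j + b_k s_j)`. -/
theorem biharmonic_LU_upper_structure (M : ℕ) (ξ₀ : ℝ)
    (H L U : ℕ → ℕ → ℝ) (a b : ℕ → ℝ)
    -- (i) the entries of H far above the diagonal
    (hH : ∀ k j, k < M → j < M → k + 6 ≤ j → (j - k) % 2 = 0 →
      H k j = ξ₀ * (pCoef k * qCoef j + rCoef k * sCoef j))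
    -- (ii) L is unit lower triangular with nonzeros only on subdiagonals 2 and 4
    (hLdiag : ∀ k, k < M → L k k = 1)
    (hLzero : ∀ k j, k < M → j < M → j ≠ k → k ≠ j + 2 → k ≠ j + 4 → L k j = 0)
    -- (iii) L·U = H
    (hLU : ∀ k j, k < M → j < M → ∑ i ∈ Finset.range M, L k i * U i j = H k j)
    -- the recursively defined vectors a and b
    (ha0 : a 0 = pCoef 0) (ha1 : a 1 = pCoef 1)
    (ha2 : a 2 = pCoef 2 - L 2 0 * a 0) (ha3 : a 3 = pCoef 3 - L 3 1 * a 1)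
    (ha : ∀ k, 4 ≤ k → a k = pCoef k - L k (k - 2) * a (k - 2) - L k (k - 4) * a (k - 4))
    (hb0 : b 0 = rCoef 0) (hb1 : b 1 = rCoef 1)
    (hb2 : b 2 = rCoef 2 - L 2 0 * b 0) (hb3 : b 3 = rCoef 3 - L 3 1 * b 1)
    (hb : ∀ k, 4 ≤ k → b k = rCoef k - L k (k - 2) * b (k - 2) - L k (k - 4) * b (k - 4)) :
    ∀ k j, k < M → j < M → k + 6 ≤ j → (j - k) % 2 = 0 →
      U k j = ξ₀ * (a k * qCoef j + b k * sCoef j) := by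
  intro k j _ hj hkj hpar
  set P : ℕ → Prop := fun i => i + 6 ≤ j ∧ (j - i) % 2 = 0
  have hrow : ∀ i, P i → bandMulVec L (U · j) i
      = bandMulVec L (fun i => ξ₀ * (a i * qCoef j + b i * sCoef j)) i := by
    rintro i ⟨hij, hipar⟩
    have hi : i < M := by omega
    rw [← sum_range_mul_eq_bandMulVec hi (hLdiag i hi) (fun l hl => hLzero i l hi hl),
      hLU i j hi hj, hH i j hi hj hij hipar, bandMulVec_linComb,
      bandMulVec_eq_of_recursion ha0 ha1 ha2 ha3 ha, bandMulVec_eq_of_recursion hb0 hb1 hb2 hb3 hb]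
  exact eq_of_bandMulVec_eq (fun i hi _ => ⟨by omega, by omega⟩) hrow k ⟨hkj, hpar⟩
end

section
/- Let M ∈ ℕ and let H, L, U be M×M real matrices and γ : ℕ → ℝ be such that: (i) H_{kj} = γ_k whenever j − k ≥ 4 and j − k is even; (ii) L has unit diagonal and L_{kj} = 0 unless j = k or j = k−2; (iii) L·U = H. Then for all indices k, j < M with j − k ≥ 4 and j − k even (and k+4 < M), U_{kj} = U_{k,k+4}; in particular every row of U contains at most three distinct values U_{k,k}, U_{k,k+2}, U_{k,k+4}, and U_{k,j} = U_{k,k+4} for all even j − k ≥ 6. -/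
/-!
Row `k` of `L * U = H` reads `U k j = H k j` for `k < 2` and
`U k j + L k (k - 2) * U (k - 2) j = H k j` otherwise. Along the even tail `j ≥ k + 4` the
right-hand side `H k j = γ k` is constant, and by induction (in steps of two) so is
`U (k - 2) j`, hence so is `U k j`.
-/

open Finset

section BandedLowerFactor

variable {R : Type*} [Semiring R] {M : ℕ} {L U : ℕ → ℕ → R}

theorem banded_row_sum_of_lt_two (hLdiag : ∀ k, k < M → L k k = 1)
    (hLzero : ∀ k j, k < M → j < M → j ≠ k → k ≠ j + 2 → L k j = 0)
    {k : ℕ} (hk : k < M) (hk2 : k < 2) (j : ℕ) :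
    ∑ i ∈ range M, L k i * U i j = U k j := by
  rw [sum_eq_single_of_mem k (mem_range.mpr hk), hLdiag k hk, one_mul]
  intro i hi hik
  rw [hLzero k i hk (mem_range.mp hi) hik (by omega), zero_mul]

theorem banded_row_sum_add_two (hLdiag : ∀ k, k < M → L k k = 1)
    (hLzero : ∀ k j, k < M → j < M → j ≠ k → k ≠ j + 2 → L k j = 0)
    {m : ℕ} (hm : m + 2 < M) (j : ℕ) :
    ∑ i ∈ range M, L (m + 2) i * U i j = U (m + 2) j + L (m + 2) m * U m j := by
  rw [sum_eq_add_of_mem (m + 2) m (mem_range.mpr hm) (mem_range.mpr (by omega)) (by omega),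
    hLdiag _ hm, one_mul]
  rintro i hi ⟨hik, him⟩
  rw [hLzero _ i hm (mem_range.mp hi) hik (by omega), zero_mul]

end BandedLowerFactor

/-- Structure of the dense upper factor in the pivot-free LU decomposition of the
Helmholtz coefficient matrix: since every row of `H` is constant (equal to `γ_k`)
along its even superdiagonal tail from offset 4 on, the upper factor `U` has
constant tails, `U_{kj} = U_{k,k+4}` for all even `j − k ≥ 4`; in particular
each row of `U` contains at most the three distinct values
`U_{k,k}`, `U_{k,k+2}`, `U_{k,k+4}`. -/
theorem helmholtz_LU_upper_structure (M : ℕ)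
    (H L U : ℕ → ℕ → ℝ) (γ : ℕ → ℝ)
    -- (i) rows of H are constant along even superdiagonal tails from offset 4
    (hH : ∀ k j, k < M → j < M → k + 4 ≤ j → (j - k) % 2 = 0 → H k j = γ k)
    -- (ii) L is unit lower triangular with nonzeros only on subdiagonal 2
    (hLdiag : ∀ k, k < M → L k k = 1)
    (hLzero : ∀ k j, k < M → j < M → j ≠ k → k ≠ j + 2 → L k j = 0)
    -- (iii) L·U = H
    (hLU : ∀ k j, k < M → j < M → ∑ i ∈ Finset.range M, L k i * U i j = H k j) :
    ∀ k j, k < M → j < M → k + 4 ≤ j → (j - k) % 2 = 0 → U k j = U k (k + 4) := by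
  intro k
  induction k using Nat.strong_induction_on with
  | _ k ih =>
    intro j hk hj hkj hpar
    have hk4 : k + 4 < M := by omega
    have hHj := (hLU k j hk hj).trans (hH k j hk hj hkj hpar)
    have hH4 := (hLU k (k + 4) hk hk4).trans (hH k (k + 4) hk hk4 le_rfl (by omega))
    rcases Nat.lt_or_ge k 2 with hk2 | hk2
    · rw [banded_row_sum_of_lt_two hLdiag hLzero hk hk2] at hHj hH4
      rw [hHj, hH4]
    · obtain ⟨m, rfl⟩ : ∃ m, k = m + 2 := ⟨k - 2, by omega⟩
      rw [banded_row_sum_add_two hLdiag hLzero hk] at hHj hH4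
      have hm_tail : U m j = U m (m + 2 + 4) := by
        rw [ih m (by omega) j (by omega) hj (by omega) (by omega),
          ih m (by omega) (m + 2 + 4) (by omega) hk4 (by omega) (by omega)]
      rw [hm_tail] at hHj
      exact add_right_cancel (hHj.trans hH4.symm)
end

section
/- Let φ̂_k(x) = T_k(x) − T_{k+2}(x). For all j, k ∈ ℕ the entries C_{kj} = ⟨φ̂_j', T_k⟩_σ satisfy: C_{kj} = −π(k+1) if j = k−1; C_{kj} = −2π if j ≥ k+1 and j − k is odd; and C_{kj} = 0 otherwise (i.e. whenever j − k is even, or j ≤ k−2). -/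
open Real Polynomial

/-- The k-th Chebyshev polynomial of the first kind, as a real polynomial. -/
noncomputable def chebT (n : ℕ) : Polynomial ℝ := Polynomial.Chebyshev.T ℝ (n : ℤ)

/-- The Chebyshev-weighted inner product `⟨f,g⟩_σ = ∫_{-1}^{1} f g (1-x²)^{-1/2} dx`. -/
noncomputable def chebInner (f g : Polynomial ℝ) : ℝ :=
  ∫ x in (-1:ℝ)..1, f.eval x * g.eval x / Real.sqrt (1 - x ^ 2)

/-- Shen's Dirichlet basis function `φ̂_k = T_k − T_{k+2}`. -/
noncomputable def shenD (k : ℕ) : Polynomial ℝ := chebT k - chebT (k + 2)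

/-!
The weight `(1 - x²)^{-1/2}` is Mathlib's `Polynomial.Chebyshev.measureT`, against which
`∫ T_n = π` for `n = 0` and `0` otherwise, so the `T_k` are orthogonal with `‖T_k‖² = π/2`
for `k ≥ 1`. The recurrence `U_{m+1} = U_{m-1} + 2 T_{m+1}` then shows that `⟨U_{m-1}, T_k⟩`
is `π` when `k < m` and `m + k` is odd, and `0` otherwise. Since `T_n' = n U_{n-1}`,
`φ̂_j' = -2 U_{j-1} - 2 (j + 2) T_{j+1}`, which gives every entry at once.
-/

namespace Polynomial.Chebyshev

open MeasureTheory

noncomputable def integralMeasureT : ℝ[X] →ₗ[ℝ] ℝ where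
  toFun p := ∫ x, p.eval x ∂measureT
  map_add' p q := by
    simp only [eval_add]
    exact integral_add (integrable_measureT p.continuous.continuousOn)
      (integrable_measureT q.continuous.continuousOn)
  map_smul' c p := by simp [integral_const_mul]

lemma integralMeasureT_apply (p : ℝ[X]) : integralMeasureT p = ∫ x, p.eval x ∂measureT := rfl

lemma integralMeasureT_T (k : ℕ) : integralMeasureT (T ℝ k) = if k = 0 then π else 0 := by
  split_ifs with hk
  · subst hk; exact integral_eval_T_real_measureT_zero
  · exact integral_eval_T_real_measureT_of_ne_zero (by exact_mod_cast hk)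

lemma integralMeasureT_T_mul_T_of_ne_zero {n : ℕ} (hn : n ≠ 0) (k : ℕ) :
    integralMeasureT (T ℝ n * T ℝ k) = if n = k then π / 2 else 0 := by
  rw [integralMeasureT_apply]
  simp only [eval_mul]
  split_ifs with hnk
  · subst hnk; exact integral_T_real_mul_self_measureT_of_ne_zero hn
  · exact integral_eval_T_real_mul_eval_T_real_measureT_of_ne hnk

lemma integralMeasureT_U_sub_one_mul_T (m k : ℕ) :
    integralMeasureT (U ℝ ((m : ℤ) - 1) * T ℝ k) =
      if k < m ∧ (m + k) % 2 = 1 then π else 0 := by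
  induction m using Nat.twoStepInduction with
  | zero => simp
  | one =>
    simp only [Nat.cast_one, sub_self, U_zero, one_mul, integralMeasureT_T]
    exact if_congr (by omega) rfl rfl
  | more m ih _ =>
    have hU : U ℝ (((m + 2 : ℕ) : ℤ) - 1) =
        U ℝ ((m : ℤ) - 1) + (2 : ℝ) • T ℝ ((m + 1 : ℕ) : ℤ) := by
      have h := two_mul_T_eq_U_sub_U ℝ ((m : ℤ) - 1)
      rw [smul_eq_C_mul, C_ofNat]
      push_cast at h ⊢
      rw [show (m : ℤ) - 1 + 2 = m + 1 by ring] at h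
      rw [show (m : ℤ) + 2 - 1 = m + 1 by ring]
      linear_combination -h
    rw [hU, add_mul, smul_mul_assoc, map_add, map_smul, ih,
      integralMeasureT_T_mul_T_of_ne_zero m.succ_ne_zero, smul_eq_mul]
    split_ifs <;> first | ring1 | (exfalso; omega)

end Polynomial.Chebyshev

open Polynomial.Chebyshev

lemma chebInner_eq_integralMeasureT (f g : ℝ[X]) : chebInner f g = integralMeasureT (f * g) := by
  rw [integralMeasureT_apply, integral_measureT]
  simp [chebInner, div_eq_mul_inv]

lemma derivative_shenD (j : ℕ) :
    derivative (shenD j) =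
      -(2 : ℝ) • U ℝ ((j : ℤ) - 1) - (2 * ((j : ℝ) + 2)) • T ℝ ((j + 1 : ℕ) : ℤ) := by
  have h := two_mul_T_eq_U_sub_U ℝ ((j : ℤ) - 1)
  rw [show (j : ℤ) - 1 + 2 = j + 1 by ring] at h
  simp only [shenD, chebT, derivative_sub, T_derivative_eq_U, smul_eq_C_mul]
  push_cast
  rw [show (j : ℤ) + 2 - 1 = j + 1 by ring]
  simp only [map_neg, map_mul, map_add, C_ofNat, map_natCast]
  linear_combination ((j : ℝ[X]) + 2) * h

lemma chebInner_derivative_shenD_chebT (j k : ℕ) :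
    chebInner (derivative (shenD j)) (chebT k) =
      -2 * (if k < j ∧ (j + k) % 2 = 1 then π else 0) -
        if j + 1 = k then ((j : ℝ) + 2) * π else 0 := by
  rw [chebInner_eq_integralMeasureT, derivative_shenD, chebT, sub_mul, smul_mul_assoc,
    smul_mul_assoc, map_sub, map_smul, map_smul, integralMeasureT_U_sub_one_mul_T,
    integralMeasureT_T_mul_T_of_ne_zero j.succ_ne_zero, smul_eq_mul, smul_eq_mul]
  split_ifs <;> ring

/-- The matrix `C_{kj} = ⟨φ̂_j', T_k⟩_σ`: `C_{k,k−1} = −π(k+1)`, `C_{kj} = −2π`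
for `j ≥ k+1` with `j − k` odd, and `C_{kj} = 0` otherwise (whenever `j − k` is
even, or `j ≤ k − 2`). -/
theorem shen_first_derivative_matrix_DT :
    -- j = k − 1 (stated with row index k+1): C_{k+1,k} = −π((k+1)+1)
    (∀ k : ℕ, chebInner (Polynomial.derivative (shenD k)) (chebT (k + 1)) =
      -Real.pi * (((k : ℝ) + 1) + 1)) ∧
    -- j ≥ k + 1 with j − k odd: C_{kj} = −2π
    (∀ j k : ℕ, k + 1 ≤ j → (j - k) % 2 = 1 →
      chebInner (Polynomial.derivative (shenD j)) (chebT k) = -2 * Real.pi) ∧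
    -- otherwise zero: j − k even, or j ≤ k − 2
    (∀ j k : ℕ, j % 2 = k % 2 ∨ j + 2 ≤ k →
      chebInner (Polynomial.derivative (shenD j)) (chebT k) = 0) := by
  refine ⟨fun k => ?_, fun j k hkj hodd => ?_, fun j k hjk => ?_⟩ <;>
    rw [chebInner_derivative_shenD_chebT]
  · rw [if_neg (by omega), if_pos rfl]
    ring
  · rw [if_pos (by omega), if_neg (by omega)]
    ring
  · rw [if_neg (by omega), if_neg (by omega)]
    ring
end

section
/- Let ν ∈ ℝ and let u₁, u₂, u₃, 𝓗₁, 𝓗₂, 𝓗₃, p̃ : ℝ⁴ → ℝ be C^∞ functions of (t, x, y, z). Suppose that for each i ∈ {1,2,3}, ∂u_i/∂t = 𝓗_i + ν Δu_i − ∂_i p̃ holds everywhere, where Δ = ∂²/∂x² + ∂²/∂y² + ∂²/∂z² is the spatial Laplacian and (∂₁, ∂₂, ∂₃) = (∂/∂x, ∂/∂y, ∂/∂z), and suppose the divergence-free condition ∂₁u₁ + ∂₂u₂ + ∂₃u₃ = 0 holds everywhere. Then everywhere ∂(Δu₁)/∂t = h_u + ν Δ²u₁, where h_u = −∂₁(∂₂𝓗₂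 + ∂₃𝓗₃) + (∂₂² + ∂₃²)𝓗₁. -/
open Real

/-- The partial derivative of `f : ℝ⁴ → ℝ` in the `i`-th coordinate direction.
Coordinate `0` is time `t`, coordinates `1, 2, 3` are the spatial directions
`x, y, z`. -/
noncomputable def pd (i : Fin 4) (f : (Fin 4 → ℝ) → ℝ) : (Fin 4 → ℝ) → ℝ :=
  fun p => fderiv ℝ f p (Pi.single i 1)

/-- The spatial Laplacian `Δ = ∂₁² + ∂₂² + ∂₃²`. -/
noncomputable def lap (f : (Fin 4 → ℝ) → ℝ) : (Fin 4 → ℝ) → ℝ :=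
  fun p => pd 1 (pd 1 f) p + pd 2 (pd 2 f) p + pd 3 (pd 3 f) p

lemma pd_smooth {f : (Fin 4 → ℝ) → ℝ} (hf : ContDiff ℝ (⊤ : ℕ∞) f) (i : Fin 4) :
    ContDiff ℝ (⊤ : ℕ∞) (pd i f) :=
  (hf.fderiv_right (by simp)).clm_apply contDiff_const

lemma pd_comm {f : (Fin 4 → ℝ) → ℝ} (hf : ContDiff ℝ (⊤ : ℕ∞) f) (i j : Fin 4) :
    pd i (pd j f) = pd j (pd i f) := by
  funext x
  have hdf : ContDiff ℝ (⊤ : ℕ∞) (fderiv ℝ f) := hf.fderiv_right (by simp)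
  have hD : DifferentiableAt ℝ (fderiv ℝ f) x :=
    (hdf.differentiable (by simp)) x
  have key : ∀ v : Fin 4 → ℝ, fderiv ℝ (fun q => fderiv ℝ f q v) x
      = (fderiv ℝ (fderiv ℝ f) x).flip v := by
    intro v
    have h := hD.hasFDerivAt.clm_apply (hasFDerivAt_const v x)
    simpa using h.fderiv
  have hsymm : fderiv ℝ (fderiv ℝ f) x (Pi.single i 1) (Pi.single j 1)
      = fderiv ℝ (fderiv ℝ f) x (Pi.single j 1) (Pi.single i 1) :=
    (hf.contDiffAt.isSymmSndFDerivAt (by norm_num; exact WithTop.coe_le_coe.mpr le_top)) _ _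
  show fderiv ℝ (pd j f) x (Pi.single i 1) = fderiv ℝ (pd i f) x (Pi.single j 1)
  rw [show pd j f = fun q => fderiv ℝ f q (Pi.single j 1) from rfl,
      show pd i f = fun q => fderiv ℝ f q (Pi.single i 1) from rfl, key, key]
  simpa using hsymm

lemma pd_add {f g : (Fin 4 → ℝ) → ℝ} (hf : ContDiff ℝ (⊤ : ℕ∞) f) (hg : ContDiff ℝ (⊤ : ℕ∞) g)
    (i : Fin 4) : pd i (fun x => f x + g x) = fun x => pd i f x + pd i g x := by
  funext x
  show fderiv ℝ (fun x => f x + g x) x (Pi.single i 1) = _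
  rw [fderiv_fun_add ((hf.differentiable (by simp)) x) ((hg.differentiable (by simp)) x)]
  rfl

lemma pd_sub {f g : (Fin 4 → ℝ) → ℝ} (hf : ContDiff ℝ (⊤ : ℕ∞) f) (hg : ContDiff ℝ (⊤ : ℕ∞) g)
    (i : Fin 4) : pd i (fun x => f x - g x) = fun x => pd i f x - pd i g x := by
  funext x
  show fderiv ℝ (fun x => f x - g x) x (Pi.single i 1) = _
  rw [fderiv_fun_sub ((hf.differentiable (by simp)) x) ((hg.differentiable (by simp)) x)]
  rfl

lemma pd_const_mul {f : (Fin 4 → ℝ) → ℝ} (hf : ContDiff ℝ (⊤ : ℕ∞) f) (c : ℝ)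
    (i : Fin 4) : pd i (fun x => c * f x) = fun x => c * pd i f x := by
  funext x
  show fderiv ℝ (fun x => c * f x) x (Pi.single i 1) = _
  rw [fderiv_const_mul ((hf.differentiable (by simp)) x)]
  rfl

lemma pd_zero (i : Fin 4) : pd i (fun _ => (0 : ℝ)) = fun _ => 0 := by
  funext x
  show fderiv ℝ (fun _ => (0 : ℝ)) x (Pi.single i 1) = 0
  rw [fderiv_fun_const]
  rfl

lemma lap_smooth {f : (Fin 4 → ℝ) → ℝ} (hf : ContDiff ℝ (⊤ : ℕ∞) f) :
    ContDiff ℝ (⊤ : ℕ∞) (lap f) := by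
  have h : ∀ i : Fin 4, ContDiff ℝ (⊤ : ℕ∞) (pd i (pd i f)) :=
    fun i => pd_smooth (pd_smooth hf i) i
  exact ((h 1).add (h 2)).add (h 3)

lemma lap_add {f g : (Fin 4 → ℝ) → ℝ} (hf : ContDiff ℝ (⊤ : ℕ∞) f) (hg : ContDiff ℝ (⊤ : ℕ∞) g) :
    lap (fun x => f x + g x) = fun x => lap f x + lap g x := by
  funext x
  have h : ∀ i : Fin 4, pd i (pd i (fun x => f x + g x)) x
      = pd i (pd i f) x + pd i (pd i g) x := by
    intro i
    rw [pd_add hf hg i, pd_add (pd_smooth hf i) (pd_smooth hg i) i]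
  show pd 1 (pd 1 _) x + pd 2 (pd 2 _) x + pd 3 (pd 3 _) x = _
  rw [h 1, h 2, h 3]
  show _ = pd 1 (pd 1 f) x + pd 2 (pd 2 f) x + pd 3 (pd 3 f) x
      + (pd 1 (pd 1 g) x + pd 2 (pd 2 g) x + pd 3 (pd 3 g) x)
  ring

lemma lap_sub {f g : (Fin 4 → ℝ) → ℝ} (hf : ContDiff ℝ (⊤ : ℕ∞) f) (hg : ContDiff ℝ (⊤ : ℕ∞) g) :
    lap (fun x => f x - g x) = fun x => lap f x - lap g x := by
  funext x
  have h : ∀ i : Fin 4, pd i (pd i (fun x => f x - g x)) x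
      = pd i (pd i f) x - pd i (pd i g) x := by
    intro i
    rw [pd_sub hf hg i, pd_sub (pd_smooth hf i) (pd_smooth hg i) i]
  show pd 1 (pd 1 _) x + pd 2 (pd 2 _) x + pd 3 (pd 3 _) x = _
  rw [h 1, h 2, h 3]
  show _ = pd 1 (pd 1 f) x + pd 2 (pd 2 f) x + pd 3 (pd 3 f) x
      - (pd 1 (pd 1 g) x + pd 2 (pd 2 g) x + pd 3 (pd 3 g) x)
  ring

lemma lap_const_mul {f : (Fin 4 → ℝ) → ℝ} (hf : ContDiff ℝ (⊤ : ℕ∞) f) (c : ℝ) :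
    lap (fun x => c * f x) = fun x => c * lap f x := by
  funext x
  have h : ∀ i : Fin 4, pd i (pd i (fun x => c * f x)) x
      = c * pd i (pd i f) x := by
    intro i
    rw [pd_const_mul hf c i, pd_const_mul (pd_smooth hf i) c i]
  show pd 1 (pd 1 _) x + pd 2 (pd 2 _) x + pd 3 (pd 3 _) x = _
  rw [h 1, h 2, h 3]
  show _ = c * (pd 1 (pd 1 f) x + pd 2 (pd 2 f) x + pd 3 (pd 3 f) x)
  ring

lemma lap_zero : lap (fun _ => (0 : ℝ)) = fun _ => 0 := by
  funext x
  show pd 1 (pd 1 _) x + pd 2 (pd 2 _) x + pd 3 (pd 3 _) x = 0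
  simp [pd_zero]

lemma pd_lap_comm {f : (Fin 4 → ℝ) → ℝ} (hf : ContDiff ℝ (⊤ : ℕ∞) f) (i : Fin 4) :
    pd i (lap f) = lap (pd i f) := by
  have h : ∀ j : Fin 4, pd i (pd j (pd j f)) = pd j (pd j (pd i f)) := by
    intro j
    rw [pd_comm (pd_smooth hf j) i j, pd_comm hf i j]
  have hl : lap f = fun x => (pd 1 (pd 1 f) x + pd 2 (pd 2 f) x) + pd 3 (pd 3 f) x := rfl
  rw [hl, pd_add ((pd_smooth (pd_smooth hf 1) 1).add (pd_smooth (pd_smooth hf 2) 2))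
        (pd_smooth (pd_smooth hf 3) 3) i,
      pd_add (pd_smooth (pd_smooth hf 1) 1) (pd_smooth (pd_smooth hf 2) 2) i]
  funext x
  show pd i (pd 1 (pd 1 f)) x + pd i (pd 2 (pd 2 f)) x + pd i (pd 3 (pd 3 f)) x
      = pd 1 (pd 1 (pd i f)) x + pd 2 (pd 2 (pd i f)) x + pd 3 (pd 3 (pd i f)) x
  rw [h 1, h 2, h 3]

/-- Pressure elimination for the wall-normal velocity component in the
Kim–Moin–Moser formulation: if `∂u_i/∂t = 𝓗_i + ν Δu_i − ∂_i p̃` for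
`i = 1, 2, 3` and `∂₁u₁ + ∂₂u₂ + ∂₃u₃ = 0`, then
`∂(Δu₁)/∂t = h_u + ν Δ²u₁` with `h_u = −∂₁(∂₂𝓗₂ + ∂₃𝓗₃) + (∂₂² + ∂₃²)𝓗₁`. -/
theorem biharmonic_equation_for_wall_normal_velocity (ν : ℝ)
    (u₁ u₂ u₃ H₁ H₂ H₃ p : (Fin 4 → ℝ) → ℝ)
    (hu₁ : ContDiff ℝ (⊤ : ℕ∞) u₁) (hu₂ : ContDiff ℝ (⊤ : ℕ∞) u₂) (hu₃ : ContDiff ℝ (⊤ : ℕ∞) u₃)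
    (hH₁ : ContDiff ℝ (⊤ : ℕ∞) H₁) (hH₂ : ContDiff ℝ (⊤ : ℕ∞) H₂) (hH₃ : ContDiff ℝ (⊤ : ℕ∞) H₃)
    (hp : ContDiff ℝ (⊤ : ℕ∞) p)
    (hmom₁ : ∀ x, pd 0 u₁ x = H₁ x + ν * lap u₁ x - pd 1 p x)
    (hmom₂ : ∀ x, pd 0 u₂ x = H₂ x + ν * lap u₂ x - pd 2 p x)
    (hmom₃ : ∀ x, pd 0 u₃ x = H₃ x + ν * lap u₃ x - pd 3 p x)
    (hdiv : ∀ x, pd 1 u₁ x + pd 2 u₂ x + pd 3 u₃ x = 0) :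
    ∀ x, pd 0 (lap u₁) x =
      (-(pd 1 (fun y => pd 2 H₂ y + pd 3 H₃ y) x)
        + (pd 2 (pd 2 H₁) x + pd 3 (pd 3 H₁) x)) + ν * lap (lap u₁) x := by
  intro x
  -- smoothness bookkeeping
  have hνlap₁ : ContDiff ℝ (⊤ : ℕ∞) (fun y => ν * lap u₁ y) := contDiff_const.mul (lap_smooth hu₁)
  have hνlap₂ : ContDiff ℝ (⊤ : ℕ∞) (fun y => ν * lap u₂ y) := contDiff_const.mul (lap_smooth hu₂)
  have hνlap₃ : ContDiff ℝ (⊤ : ℕ∞) (fun y => ν * lap u₃ y) := contDiff_const.mul (lap_smooth hu₃)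
  -- Step A: the pressure Poisson equation: lap p = ∂₁H₁ + ∂₂H₂ + ∂₃H₃
  have poisson : ∀ y, lap p y = pd 1 H₁ y + pd 2 H₂ y + pd 3 H₃ y := by
    intro y
    -- apply ∂ᵢ to the i-th momentum equation
    have key : ∀ (i : Fin 4) (u H : (Fin 4 → ℝ) → ℝ), ContDiff ℝ (⊤ : ℕ∞) u → ContDiff ℝ (⊤ : ℕ∞) H →
        (∀ z, pd 0 u z = H z + ν * lap u z - pd i p z) →
        pd 0 (pd i u) y = pd i H y + ν * lap (pd i u) y - pd i (pd i p) y := by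
      intro i u H hu hH hmom
      have h1 : pd 0 u = fun z => (H z + ν * lap u z) - pd i p z := funext hmom
      have h2 : pd i (pd 0 u) = fun z =>
          pd i H z + ν * lap (pd i u) z - pd i (pd i p) z := by
        rw [h1, pd_sub (hH.add (contDiff_const.mul (lap_smooth hu))) (pd_smooth hp i) i,
            pd_add hH (contDiff_const.mul (lap_smooth hu)) i,
            pd_const_mul (lap_smooth hu) ν i, pd_lap_comm hu i]
      rw [pd_comm hu 0 i]
      exact congrFun h2 y
    have k1 := key 1 u₁ H₁ hu₁ hH₁ hmom₁
    have k2 := key 2 u₂ H₂ hu₂ hH₂ hmom₂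
    have k3 := key 3 u₃ H₃ hu₃ hH₃ hmom₃
    -- the divergence vanishes, so its time derivative and Laplacian vanish
    have hdfun : (fun z => (pd 1 u₁ z + pd 2 u₂ z) + pd 3 u₃ z) = fun _ => (0 : ℝ) :=
      funext hdiv
    have hsum0 : pd 0 (pd 1 u₁) y + pd 0 (pd 2 u₂) y + pd 0 (pd 3 u₃) y = 0 := by
      have e : pd 0 (fun z => (pd 1 u₁ z + pd 2 u₂ z) + pd 3 u₃ z) y = 0 := by
        rw [hdfun, pd_zero]
      rw [pd_add ((pd_smooth hu₁ 1).add (pd_smooth hu₂ 2)) (pd_smooth hu₃ 3) 0,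
          pd_add (pd_smooth hu₁ 1) (pd_smooth hu₂ 2) 0] at e
      exact e
    have hlap0 : lap (pd 1 u₁) y + lap (pd 2 u₂) y + lap (pd 3 u₃) y = 0 := by
      have e : lap (fun z => (pd 1 u₁ z + pd 2 u₂ z) + pd 3 u₃ z) y = 0 := by
        rw [hdfun, lap_zero]
      rw [lap_add ((pd_smooth hu₁ 1).add (pd_smooth hu₂ 2)) (pd_smooth hu₃ 3),
          lap_add (pd_smooth hu₁ 1) (pd_smooth hu₂ 2)] at e
      exact e
    have l1 : pd 0 (pd 1 u₁) y = pd 1 H₁ y + ν * lap (pd 1 u₁) y - pd 1 (pd 1 p) y := k1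
    have l2 : pd 0 (pd 2 u₂) y = pd 2 H₂ y + ν * lap (pd 2 u₂) y - pd 2 (pd 2 p) y := k2
    have l3 : pd 0 (pd 3 u₃) y = pd 3 H₃ y + ν * lap (pd 3 u₃) y - pd 3 (pd 3 p) y := k3
    have hlapp : lap p y = pd 1 (pd 1 p) y + pd 2 (pd 2 p) y + pd 3 (pd 3 p) y := rfl
    linear_combination hlapp + l1 + l2 + l3 - hsum0 + ν * hlap0
  -- Step B: ∂₀(Δu₁) = Δ(∂₀ u₁) = ΔH₁ + ν Δ²u₁ - Δ(∂₁ p)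
  have hB : pd 0 (lap u₁) x = lap H₁ x + ν * lap (lap u₁) x - lap (pd 1 p) x := by
    have h1 : pd 0 (lap u₁) = lap (pd 0 u₁) := by
      rw [← pd_lap_comm hu₁ 0]
    have h2 : pd 0 u₁ = fun z => (H₁ z + ν * lap u₁ z) - pd 1 p z := funext hmom₁
    rw [h1, h2, lap_sub (hH₁.add hνlap₁) (pd_smooth hp 1),
        lap_add hH₁ hνlap₁, lap_const_mul (lap_smooth hu₁) ν]
  -- Step C: Δ(∂₁p) = ∂₁(Δp) = ∂₁(∂₁H₁ + ∂₂H₂ + ∂₃H₃)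
  have hC : lap (pd 1 p) x = pd 1 (pd 1 H₁) x + pd 1 (pd 2 H₂) x + pd 1 (pd 3 H₃) x := by
    have h1 : lap (pd 1 p) = pd 1 (lap p) := (pd_lap_comm hp 1).symm
    have h2 : lap p = fun y => (pd 1 H₁ y + pd 2 H₂ y) + pd 3 H₃ y := by
      funext y; rw [poisson y]
    rw [h1, h2, pd_add ((pd_smooth hH₁ 1).add (pd_smooth hH₂ 2)) (pd_smooth hH₃ 3) 1,
        pd_add (pd_smooth hH₁ 1) (pd_smooth hH₂ 2) 1]
  -- Step D: assemble
  have hD : pd 1 (fun y => pd 2 H₂ y + pd 3 H₃ y) x = pd 1 (pd 2 H₂) x + pd 1 (pd 3 H₃) x := by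
    rw [pd_add (pd_smooth hH₂ 2) (pd_smooth hH₃ 3) 1]
  have hlapH₁ : lap H₁ x = pd 1 (pd 1 H₁) x + pd 2 (pd 2 H₁) x + pd 3 (pd 3 H₁) x := rfl
  rw [hB, hC, hD, hlapH₁]
  ring
end

section
/- Let N ∈ ℕ with N ≥ 2. The polynomials φ̂_0, φ̂_1, …, φ̂_{N−2}, where φ̂_k(x) = T_k(x) − T_{k+2}(x), form a basis of the real vector space { p ∈ ℝ[X] : deg p ≤ N, p(1) = 0 and p(−1) = 0 }; in particular they are linearly independent and this space has dimension N − 1. -/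
open Real Polynomial

/-- The space `{ p ∈ ℝ[X] : deg p ≤ N, p(1) = 0, p(−1) = 0 }` of polynomials of
degree at most `N` satisfying the homogeneous Dirichlet boundary conditions. -/
noncomputable def dirichletSpace (N : ℕ) : Submodule ℝ (Polynomial ℝ) where
  carrier := {p | p.degree ≤ (N : ℕ) ∧ p.eval (1 : ℝ) = 0 ∧ p.eval (-1 : ℝ) = 0}
  add_mem' := by
    rintro p q ⟨hp, hp1, hp2⟩ ⟨hq, hq1, hq2⟩
    exact ⟨le_trans (Polynomial.degree_add_le p q) (max_le hp hq),
      by simp [hp1, hq1], by simp [hp2, hq2]⟩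
  zero_mem' := ⟨by simp, by simp, by simp⟩
  smul_mem' := by
    rintro c p ⟨hp, hp1, hp2⟩
    exact ⟨le_trans (Polynomial.degree_smul_le c p) hp, by simp [hp1], by simp [hp2]⟩

/-!
Shen's basis function factors as `φ̂_k = T_k - T_{k+2} = 2 (1 - X²) U_k`. A polynomial of degree
at most `N` vanishes at `±1` exactly when it is `(1 - X²) q` with `deg q < N - 1`, so the
Dirichlet space is the image of the polynomials of degree `< N - 1` under the injective map
`q ↦ 2 (1 - X²) q`. Since `U_0, …, U_{N-2}` form a basis of that space of polynomials,
their images `φ̂_0, …, φ̂_{N-2}` form a basis of the Dirichlet space.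
-/

open Polynomial Polynomial.Chebyshev Submodule

namespace Polynomial.Chebyshev

variable (R : Type*) [CommRing R]

noncomputable def chebyshevUsequence [IsDomain R] [NeZero (2 : R)] : Polynomial.Sequence R where
  elems' n := U R n
  degree_eq' n := degree_U_natCast R n

theorem T_sub_T_add_two (n : ℤ) : T R n - T R (n + 2) = 2 * (1 - X ^ 2) * U R n := by
  have hU := one_sub_X_sq_mul_U_eq_pol_in_T R n
  have hT := T_mul_T R (n + 1) 1
  rw [T_one, add_sub_cancel_right, add_assoc, one_add_one_eq_two] at hT
  linear_combination (-2) * hU - hT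

end Polynomial.Chebyshev

theorem Polynomial.one_sub_X_sq_dvd {R : Type*} [CommRing R] (h2 : IsUnit (2 : R)) {p : R[X]}
    (h₁ : p.eval 1 = 0) (h₂ : p.eval (-1) = 0) : 1 - X ^ 2 ∣ p := by
  have hcop : IsCoprime (X - C (1 : R)) (X - C (-1)) :=
    isCoprime_X_sub_C_of_isUnit_sub (by rwa [sub_neg_eq_add, one_add_one_eq_two])
  have hdvd := hcop.mul_dvd (dvd_iff_isRoot.mpr h₁) (dvd_iff_isRoot.mpr h₂)
  have hfac : (X - C (1 : R)) * (X - C (-1)) = -(1 - X ^ 2) := by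
    rw [map_one, map_neg, map_one]; ring
  rwa [hfac, neg_dvd] at hdvd

-- `N - 1` truncates at `0`, which is harmless: for `N ≤ 1` both sides say `q = 0`.
theorem Polynomial.degree_one_sub_X_sq_mul_le_iff {R : Type*} [CommRing R] [IsDomain R]
    (q : R[X]) (N : ℕ) : ((1 - X ^ 2) * q).degree ≤ (N : WithBot ℕ) ↔ q.degree < (N - 1 : ℕ) := by
  rcases eq_or_ne q 0 with rfl | hq
  · simp
  have hdeg : (1 - X ^ 2 : R[X]).degree = 2 := by compute_degree!
  rw [degree_mul, hdeg, degree_eq_natDegree hq]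
  norm_cast
  omega

theorem shenD_eq (k : ℕ) : shenD k = 2 * (1 - X ^ 2) * U ℝ k := by
  rw [shenD, chebT, chebT, Nat.cast_add, Nat.cast_two, T_sub_T_add_two]

theorem dirichletSpace_eq_map_degreeLT (N : ℕ) :
    dirichletSpace N = (degreeLT ℝ (N - 1)).map (LinearMap.mulLeft ℝ (1 - X ^ 2)) := by
  ext p
  constructor
  · rintro ⟨hdeg, h₁, h₂⟩
    obtain ⟨q, rfl⟩ := one_sub_X_sq_dvd (isUnit_iff_ne_zero.mpr two_ne_zero) h₁ h₂
    exact ⟨q, mem_degreeLT.mpr ((degree_one_sub_X_sq_mul_le_iff q N).mp hdeg), rfl⟩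
  · rintro ⟨q, hq, rfl⟩
    exact ⟨(degree_one_sub_X_sq_mul_le_iff q N).mpr (mem_degreeLT.mp hq), by simp, by simp⟩

theorem shenD_eq_comp :
    shenD = ((2 : ℝ) • LinearMap.mulLeft ℝ (1 - X ^ 2 : ℝ[X])) ∘ chebyshevUsequence ℝ := by
  funext k
  rw [Function.comp_apply, shenD_eq, LinearMap.smul_apply, LinearMap.mulLeft_apply, smul_eq_C_mul,
    map_ofNat, mul_assoc]
  rfl

theorem shenD_linearIndependent : LinearIndependent ℝ shenD := by
  have hne : (1 - X ^ 2 : ℝ[X]) ≠ 0 := fun h => by simpa using congrArg (eval 0) h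
  have hker : LinearMap.ker ((2 : ℝ) • LinearMap.mulLeft ℝ (1 - X ^ 2 : ℝ[X])) = ⊥ :=
    LinearMap.ker_eq_bot.mpr fun p q hpq => by simpa [hne] using hpq
  rw [shenD_eq_comp]
  exact (chebyshevUsequence ℝ).linearIndependent.map' _ hker

theorem span_shenD_image_Iio (N : ℕ) : span ℝ (shenD '' Set.Iio (N - 1)) = dirichletSpace N := by
  have hU : span ℝ (chebyshevUsequence ℝ '' Set.Iio (N - 1)) = degreeLT ℝ (N - 1) :=
    (chebyshevUsequence ℝ).span_degreeLT fun i _ => by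
      simp [chebyshevUsequence, leadingCoeff_U_natCast]
  rw [shenD_eq_comp, Set.image_comp, span_image, hU, Submodule.map_smul _ _ _ two_ne_zero,
    dirichletSpace_eq_map_degreeLT]

/-- For `N ≥ 2`, the polynomials `φ̂_0, …, φ̂_{N−2}` form a basis of the space of
polynomials of degree at most `N` vanishing at `±1`; in particular they are
linearly independent and the space has dimension `N − 1`. -/
theorem shenD_is_basis (N : ℕ) (hN : 2 ≤ N) :
    (∀ k : ℕ, k ≤ N - 2 → shenD k ∈ dirichletSpace N) ∧
    LinearIndependent ℝ (fun k : Fin (N - 1) => shenD (k : ℕ)) ∧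
    Submodule.span ℝ (Set.range (fun k : Fin (N - 1) => shenD (k : ℕ))) = dirichletSpace N ∧
    Module.finrank ℝ (dirichletSpace N) = N - 1 := by
  have hspan : span ℝ (Set.range fun k : Fin (N - 1) => shenD k) = dirichletSpace N := by
    rw [← span_shenD_image_Iio, ← Fin.range_val, ← Set.range_comp]
    rfl
  have hind : LinearIndependent ℝ (fun k : Fin (N - 1) => shenD k) :=
    shenD_linearIndependent.comp _ Fin.val_injective
  refine ⟨fun k hk => hspan ▸ subset_span ⟨⟨k, by omega⟩, rfl⟩, hind, hspan, ?_⟩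
  rw [← hspan, finrank_span_eq_card hind, Fintype.card_fin]
end
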